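/- arXiv:2508.12052 — 4 statements merged into one kernel-verified Lean document; each statement's English description precedes it below -/
import Mathlib

section
/- Fix κ₀, κ₁, θ, κ∞ ∈ ℂ and set κ = ((κ₀+κ₁+θ−1)² − κ∞²)/4. Let U ⊆ ℂ be open and let q, p : U → ℂ be differentiable functions satisfying the Okamoto PVI Hamiltonian system on U, such that for all t ∈ U one has t(t−1) ≠ 0 and q(t) ∉ {0, 1, t}. Then q is twice differentiable on U and satisfies the Painlevé VI equation with parameters α = κ∞²/2, β = −κ₀²/2, γ = κ₁²/2, δ = (1−θ²)/2. -/
/-- Right-hand side of the `q`-equation of the Okamoto PVI Hamiltonian system. -/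
noncomputable def OkRq (κ₀ κ₁ θ κ : ℂ) (t q p : ℂ) : ℂ :=
  (1 / (t * (t - 1)))
    * ((q - 1) * (q - t) * (2 * q * p - κ₀) - κ₁ * q * (q - t)
        - (θ - 1) * q * (q - 1))

/-- Right-hand side of the `p`-equation of the Okamoto PVI Hamiltonian system. -/
noncomputable def OkRp (κ₀ κ₁ θ κ : ℂ) (t q p : ℂ) : ℂ :=
  -(1 / (t * (t - 1)))
    * (((3 * q ^ 2 - 2 * (t + 1) * q + t) * p - (κ₀ + κ₁) * (2 * q - t)
        - (θ - 1) * (2 * q - 1) + κ₀) * p + κ)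

/-- Right-hand side of the Painlevé VI equation with parameters α, β, γ, δ,
evaluated at time `t`, position `w` and velocity `w'`. -/
noncomputable def PVIrhs (α β γ δ : ℂ) (t w w' : ℂ) : ℂ :=
  (1 / 2) * (1 / w + 1 / (w - 1) + 1 / (w - t)) * w' ^ 2
    - (1 / t + 1 / (t - 1) + 1 / (w - t)) * w'
    + (w * (w - 1) * (w - t) / (t ^ 2 * (t - 1) ^ 2))
        * (α + β * t / w ^ 2 + γ * (t - 1) / (w - 1) ^ 2
            + δ * t * (t - 1) / (w - t) ^ 2)

/-!
On `U` the equation `q' = R(t, q, p)` with `R = OkRq` holds identically, so `q'` is itself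
differentiable and its derivative is the total derivative `∂ₜR + q' ∂_qR + p' ∂_pR`. Substituting
the Hamiltonian equations for `q'` and `p'` and using `κ = ((κ₀ + κ₁ + θ - 1)² - κ∞²)/4`, it
equals the Painlevé VI right-hand side at `(t, q, R(t, q, p))`, an identity of rational functions
of `(t, q, p)`.
-/

open Filter Topology

section
variable (κ₀ κ₁ θ κ : ℂ)

/-- `∂ₜR + q' ∂_qR + p' ∂_pR` for `R = OkRq κ₀ κ₁ θ κ`. -/
noncomputable def OkRqDeriv (t q p q' p' : ℂ) : ℂ :=
  (κ₁ * q - (q - 1) * (2 * q * p - κ₀)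
      + ((2 * q - t - 1) * (2 * q * p - κ₀) + 2 * p * (q - 1) * (q - t)
          - κ₁ * (2 * q - t) - (θ - 1) * (2 * q - 1)) * q'
      + 2 * q * (q - 1) * (q - t) * p'
      - (2 * t - 1) * OkRq κ₀ κ₁ θ κ t q p) / (t * (t - 1))

theorem hasDerivAt_OkRq_comp {q p : ℂ → ℂ} {q' p' t : ℂ} (hq : HasDerivAt q q' t)
    (hp : HasDerivAt p p' t) (ht : t * (t - 1) ≠ 0) :
    HasDerivAt (fun s ↦ OkRq κ₀ κ₁ θ κ s (q s) (p s))
      (OkRqDeriv κ₀ κ₁ θ κ t (q t) (p t) q' p') t := by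
  have hs := hasDerivAt_id' t
  have hnum := ((((hq.sub_const 1).fun_mul (hq.fun_sub hs)).fun_mul
    (((hq.const_mul 2).fun_mul hp).sub_const κ₀)).fun_sub
    ((hq.const_mul κ₁).fun_mul (hq.fun_sub hs))).fun_sub
    ((hq.const_mul (θ - 1)).fun_mul (hq.sub_const 1))
  have hden := hs.fun_mul (hs.sub_const 1)
  refine (((hasDerivAt_const t (1 : ℂ)).fun_div hden ht).fun_mul hnum).congr_deriv ?_
  obtain ⟨ht₀, ht₁⟩ := mul_ne_zero_iff.mp ht
  simp only [OkRqDeriv, OkRq]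
  field_simp
  ring

theorem OkRqDeriv_eq_PVIrhs {κinf t x y : ℂ} (hκ : κ = ((κ₀ + κ₁ + θ - 1) ^ 2 - κinf ^ 2) / 4)
    (ht : t * (t - 1) ≠ 0) (hx₀ : x ≠ 0) (hx₁ : x ≠ 1) (hxt : x ≠ t) :
    OkRqDeriv κ₀ κ₁ θ κ t x y (OkRq κ₀ κ₁ θ κ t x y) (OkRp κ₀ κ₁ θ κ t x y)
      = PVIrhs (κinf ^ 2 / 2) (-(κ₀ ^ 2) / 2) (κ₁ ^ 2 / 2) ((1 - θ ^ 2) / 2)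
          t x (OkRq κ₀ κ₁ θ κ t x y) := by
  obtain ⟨ht₀, ht₁⟩ := mul_ne_zero_iff.mp ht
  have hx₁' : x - 1 ≠ 0 := sub_ne_zero.mpr hx₁
  have hxt' : x - t ≠ 0 := sub_ne_zero.mpr hxt
  subst hκ
  simp only [OkRqDeriv, OkRq, OkRp, PVIrhs]
  field_simp
  ring

end

/-- solutions of the Okamoto PVI Hamiltonian system with
`κ = ((κ₀+κ₁+θ-1)² - κ∞²)/4` give solutions of Painlevé VI with parameters
α = κ∞²/2, β = -κ₀²/2, γ = κ₁²/2, δ = (1-θ²)/2. -/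
theorem Okamoto_solves_PVI
    (κ₀ κ₁ θ κinf κ : ℂ) (hκ : κ = ((κ₀ + κ₁ + θ - 1) ^ 2 - κinf ^ 2) / 4)
    (U : Set ℂ) (hU : IsOpen U) (q p : ℂ → ℂ)
    (hreg : ∀ t ∈ U, t * (t - 1) ≠ 0 ∧ q t ≠ 0 ∧ q t ≠ 1 ∧ q t ≠ t)
    (hq : ∀ t ∈ U, HasDerivAt q (OkRq κ₀ κ₁ θ κ t (q t) (p t)) t)
    (hp : ∀ t ∈ U, HasDerivAt p (OkRp κ₀ κ₁ θ κ t (q t) (p t)) t) :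
    ∀ t ∈ U, HasDerivAt (deriv q)
      (PVIrhs (κinf ^ 2 / 2) (-(κ₀ ^ 2) / 2) (κ₁ ^ 2 / 2) ((1 - θ ^ 2) / 2)
        t (q t) (deriv q t)) t := by
  intro t ht
  obtain ⟨htt, hq₀, hq₁, hqt⟩ := hreg t ht
  have hderiv_q : deriv q =ᶠ[𝓝 t] fun s ↦ OkRq κ₀ κ₁ θ κ s (q s) (p s) :=
    eventually_of_mem (hU.mem_nhds ht) fun s hs ↦ (hq s hs).deriv
  rw [(hq t ht).deriv, ← OkRqDeriv_eq_PVIrhs κ₀ κ₁ θ κ hκ htt hq₀ hq₁ hqt]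
  exact (hasDerivAt_OkRq_comp κ₀ κ₁ θ κ (hq t ht) (hp t ht) htt).congr_of_eventuallyEq
    hderiv_q
end

section
/- Fix a₀, a₁, a₂, a₃, a₄ ∈ ℂ with a₀ + a₁ + 2a₂ + a₃ + a₄ = 1, and set θ = a₀, κ₀ = a₄, κ₁ = a₃, κ = a₂(a₁+a₂). Let U ⊆ ℂ be open and let q, p : U → ℂ be differentiable functions satisfying the Okamoto PVI Hamiltonian system (with parameters κ₀, κ₁, θ, κ) on U, such that for all t ∈ U one has t(t−1) ≠ 0 and q(t) ≠ 0. Then the pair of functions f := q and g := q·p satisfies the Kajiwara–Noumi–Yamada PVI Hamiltonian system with root variables a₀, a₁, a₂, a₃, a₄ on U. -/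
/-- Right-hand side of the `f`-equation of the KNY PVI Hamiltonian system. -/
noncomputable def KNYRf (a₀ a₁ a₂ a₃ a₄ : ℂ) (t f g : ℂ) : ℂ :=
  (1 / (t * (t - 1)))
    * ((f - 1) * (f - t) * (2 * g - a₄) - (a₀ - 1) * f * (f - 1) - a₃ * f * (f - t))

/-- Right-hand side of the `g`-equation of the KNY PVI Hamiltonian system. -/
noncomputable def KNYRg (a₀ a₁ a₂ a₃ a₄ : ℂ) (t f g : ℂ) : ℂ :=
  -(1 / (t * (t - 1)))
    * (f * (g + a₂) * (g + a₁ + a₂) - (t * g / f) * (g - a₄))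

/-!
Since `f = q`, the two `f`-equations coincide once the parameters are matched. For `g = q p` the
product rule gives `g' = q' p + q p'`; after eliminating `a₀` through the normalization, this agrees
with the KNY right-hand side, whose term `t g / f` equals `t p` because `q ≠ 0`.
-/

theorem OkRq_eq_KNYRf (a₀ a₁ a₂ a₃ a₄ κ t q p : ℂ) :
    OkRq a₄ a₃ a₀ κ t q p = KNYRf a₀ a₁ a₂ a₃ a₄ t q (q * p) := by
  simp only [OkRq, KNYRf]
  ring

theorem OkRq_mul_add_mul_OkRp_eq_KNYRg {a₀ a₁ a₂ a₃ a₄ : ℂ}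
    (hnorm : a₀ + a₁ + 2 * a₂ + a₃ + a₄ = 1) (t : ℂ) {q : ℂ} (hq : q ≠ 0) (p : ℂ) :
    OkRq a₄ a₃ a₀ (a₂ * (a₁ + a₂)) t q p * p + q * OkRp a₄ a₃ a₀ (a₂ * (a₁ + a₂)) t q p
      = KNYRg a₀ a₁ a₂ a₃ a₄ t q (q * p) := by
  obtain rfl : a₀ = 1 - a₁ - 2 * a₂ - a₃ - a₄ := by linear_combination hnorm
  simp only [OkRq, OkRp, KNYRg]
  rw [mul_div_assoc, mul_div_cancel_left₀ p hq]
  ring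

theorem Okamoto_to_KNY_PVI_general
    (a₀ a₁ a₂ a₃ a₄ κ₀ κ₁ θ κ : ℂ)
    (hnorm : a₀ + a₁ + 2 * a₂ + a₃ + a₄ = 1)
    (hθ : θ = a₀) (hκ₀ : κ₀ = a₄) (hκ₁ : κ₁ = a₃) (hκ : κ = a₂ * (a₁ + a₂))
    (U : Set ℂ) (q p : ℂ → ℂ)
    (hreg : ∀ t ∈ U, t * (t - 1) ≠ 0 ∧ q t ≠ 0)
    (hq : ∀ t ∈ U, HasDerivAt q (OkRq κ₀ κ₁ θ κ t (q t) (p t)) t)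
    (hp : ∀ t ∈ U, HasDerivAt p (OkRp κ₀ κ₁ θ κ t (q t) (p t)) t) :
    ∀ t ∈ U,
      HasDerivAt q (KNYRf a₀ a₁ a₂ a₃ a₄ t (q t) (q t * p t)) t ∧
      HasDerivAt (fun t' => q t' * p t')
        (KNYRg a₀ a₁ a₂ a₃ a₄ t (q t) (q t * p t)) t := by
  subst θ κ₀ κ₁ κ
  intro t ht
  refine ⟨OkRq_eq_KNYRf a₀ a₁ a₂ a₃ a₄ _ t (q t) (p t) ▸ hq t ht, ?_⟩
  rw [← OkRq_mul_add_mul_OkRp_eq_KNYRg hnorm t (hreg t ht).2 (p t)]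
  exact (hq t ht).mul (hp t ht)

/-- the change of variables `(f,g) = (q, qp)` maps solutions of
the Okamoto PVI system (with θ = a₀, κ₀ = a₄, κ₁ = a₃, κ = a₂(a₁+a₂)) to
solutions of the KNY PVI Hamiltonian system. -/
theorem Okamoto_to_KNY_PVI
    (a₀ a₁ a₂ a₃ a₄ κ₀ κ₁ θ κ : ℂ)
    (hnorm : a₀ + a₁ + 2 * a₂ + a₃ + a₄ = 1)
    (hθ : θ = a₀) (hκ₀ : κ₀ = a₄) (hκ₁ : κ₁ = a₃) (hκ : κ = a₂ * (a₁ + a₂))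
    (U : Set ℂ) (hU : IsOpen U) (q p : ℂ → ℂ)
    (hreg : ∀ t ∈ U, t * (t - 1) ≠ 0 ∧ q t ≠ 0)
    (hq : ∀ t ∈ U, HasDerivAt q (OkRq κ₀ κ₁ θ κ t (q t) (p t)) t)
    (hp : ∀ t ∈ U, HasDerivAt p (OkRp κ₀ κ₁ θ κ t (q t) (p t)) t) :
    ∀ t ∈ U,
      HasDerivAt q (KNYRf a₀ a₁ a₂ a₃ a₄ t (q t) (q t * p t)) t ∧
      HasDerivAt (fun t' => q t' * p t')
        (KNYRg a₀ a₁ a₂ a₃ a₄ t (q t) (q t * p t)) t :=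
  Okamoto_to_KNY_PVI_general a₀ a₁ a₂ a₃ a₄ κ₀ κ₁ θ κ hnorm hθ hκ₀ hκ₁ hκ U q p hreg hq hp
end

section
/- Fix κ₀, θ∞ ∈ ℂ. Let U ⊆ ℂ be open and let f, g : U → ℂ be differentiable functions satisfying the Okamoto PIV Hamiltonian system on U, such that f(t) ≠ 0 for all t ∈ U. Then f is twice differentiable on U and satisfies the Painlevé IV equation with parameters α = 1 + 2θ∞ − κ₀ and β = −2κ₀². -/
open Filter Topology

/-! Differentiating the first Hamilton equation gives
`f'' = 4 f' g + 4 f g' - 2 f f' - 2 f - 2 t f'`. Eliminating `g` through the first equation,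
`4 f g = f' + f² + 2 t f + 2 κ₀`, and `g'` through the second, turns the right-hand side into
the Painlevé IV expression in `f` and `f'`; the division by `f` is where `f ≠ 0` enters. -/

section DerivOnOpen

variable {𝕜 F : Type*} [NontriviallyNormedField 𝕜] [NormedAddCommGroup F] [NormedSpace 𝕜 F]

theorem deriv_eventuallyEq_of_hasDerivAt_on_open {f f' : 𝕜 → F} {U : Set 𝕜} (hU : IsOpen U)
    (hf : ∀ t ∈ U, HasDerivAt f (f' t) t) {t : 𝕜} (ht : t ∈ U) : deriv f =ᶠ[𝓝 t] f' := by
  filter_upwards [hU.mem_nhds ht] with s hs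
  exact (hf s hs).deriv

theorem hasDerivAt_deriv_of_hasDerivAt_on_open {f f' : 𝕜 → F} {U : Set 𝕜} (hU : IsOpen U)
    (hf : ∀ t ∈ U, HasDerivAt f (f' t) t) {t : 𝕜} (ht : t ∈ U) {a : F}
    (hf' : HasDerivAt f' a t) : HasDerivAt (deriv f) a t :=
  hf'.congr_of_eventuallyEq (deriv_eventuallyEq_of_hasDerivAt_on_open hU hf ht)

end DerivOnOpen

theorem hasDerivAt_okamoto_rhs {κ₀ t f' g' : ℂ} {f g : ℂ → ℂ} (hf : HasDerivAt f f' t)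
    (hg : HasDerivAt g g' t) :
    HasDerivAt (fun s => 4 * f s * g s - f s ^ 2 - 2 * s * f s - 2 * κ₀)
      (4 * (f' * g t + f t * g') - 2 * f t * f' - 2 * (f t + t * f')) t := by
  have h := ((((hf.const_mul 4).mul hg).sub (hf.pow 2)).sub
    (((hasDerivAt_id t).const_mul 2).mul hf)).sub (hasDerivAt_const t (2 * κ₀))
  exact h.congr_deriv (by simp only [id, Nat.cast_ofNat]; ring)

theorem okamoto_second_derivative_eq_painleveIV {K : Type*} [Field K] [CharZero K]
    {κ₀ θinf t x y x' y' : K} (hx : x ≠ 0)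
    (hx' : x' = 4 * x * y - x ^ 2 - 2 * t * x - 2 * κ₀)
    (hy' : y' = -2 * y ^ 2 + (2 * x + 2 * t) * y - θinf) :
    4 * (x' * y + x * y') - 2 * x * x' - 2 * (x + t * x') =
      (1 / (2 * x)) * x' ^ 2 + (3 / 2) * x ^ 3 + 4 * t * x ^ 2
        + 2 * (t ^ 2 - (1 + 2 * θinf - κ₀)) * x + (-2 * κ₀ ^ 2) / x := by
  subst hx' hy'
  field_simp
  ring

/-- solutions of the Okamoto PIV Hamiltonian system give
solutions of the Painlevé IV equation with parameters
α = 1 + 2θ∞ - κ₀ and β = -2κ₀². -/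
theorem Okamoto_solves_PIV
    (κ₀ θinf : ℂ) (U : Set ℂ) (hU : IsOpen U) (f g : ℂ → ℂ)
    (hreg : ∀ t ∈ U, f t ≠ 0)
    (hf : ∀ t ∈ U, HasDerivAt f
      (4 * f t * g t - (f t) ^ 2 - 2 * t * f t - 2 * κ₀) t)
    (hg : ∀ t ∈ U, HasDerivAt g
      (-2 * (g t) ^ 2 + (2 * f t + 2 * t) * g t - θinf) t) :
    ∀ t ∈ U, HasDerivAt (deriv f)
      ((1 / (2 * f t)) * (deriv f t) ^ 2 + (3 / 2) * (f t) ^ 3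
        + 4 * t * (f t) ^ 2 + 2 * (t ^ 2 - (1 + 2 * θinf - κ₀)) * f t
        + (-2 * κ₀ ^ 2) / f t) t := by
  intro t ht
  have hf'' := hasDerivAt_deriv_of_hasDerivAt_on_open hU hf ht
    (hasDerivAt_okamoto_rhs (κ₀ := κ₀) (hf t ht) (hg t ht))
  rw [(hf t ht).deriv]
  exact hf''.congr_deriv (okamoto_second_derivative_eq_painleveIV (hreg t ht) rfl rfl)
end

section
/- Let L be the free ℤ-module with basis (H_q, H_p, E₁, …, E₉) equipped with the symmetric bilinear form determined by H_q·H_p = 1, H_q·H_q = H_p·H_p = 0, E_i·E_j = −1 if i = j and 0 if i ≠ j, and H_q·E_i = H_p·E_i = 0; let L′ be the free ℤ-module with basis (H_x, H_y, F₁, …, F₉) with the analogously defined form. Then the ℤ-linear map Φ : L′ → L defined by Φ(H_x) = 2H_q + H_p − E₁ − E₂ − E₃ − E₉, Φ(H_y) = H_q, Φ(F₁) = H_q − E₉, Φ(F₂) = H_q − E₃, Φ(F₃) = E₄, Φ(F₄) = H_q − E₂, Φ(F₅) = H_q − E₁, Φ(F₆) = E₅, Φ(F₇) = E₆, Φ(F₈)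 = E₇, Φ(F₉) = E₈ preserves the bilinear forms (it is an isometry), and it is bijective with inverse Ψ : L → L′ given by Ψ(H_q) = H_y, Ψ(H_p) = H_x + 2H_y − F₁ − F₂ − F₄ − F₅, Ψ(E₁) = H_y − F₅, Ψ(E₂) = H_y − F₄, Ψ(E₃) = H_y − F₂, Ψ(E₄) = F₃, Ψ(E₅) = F₆, Ψ(E₆) = F₇, Ψ(E₇) = F₈, Ψ(E₈) = F₉, Ψ(E₉) = H_y − F₁. -/
open Matrix

open Fin.NatCast in
/-- The intersection form on the Picard lattice of a rational surface obtained
from `ℙ¹×ℙ¹` by nine blowups, in the basis `(H₁, H₂, E₁, …, E₉)` (indices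
`0, 1, 2, …, 10`): `H₁·H₂ = 1`, `H₁² = H₂² = 0`, `Eᵢ·Eⱼ = -δᵢⱼ`,
`Hₖ·Eᵢ = 0`. -/
def picForm (v w : Fin 11 → ℤ) : ℤ :=
  v 0 * w 1 + v 1 * w 0 - ∑ i : Fin 9, v i.succ.succ.castSucc.castSucc * w i.succ.succ.castSucc.castSucc

/-- The matrix of the map `Φ : L' → L` of Lemma 3.1: column `j` lists the
coordinates of the image of the `j`-th basis vector of
`L' = Span(H_x, H_y, F₁, …, F₉)` in the basis `(H_q, H_p, E₁, …, E₉)` of `L`.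
Explicitly: `Φ(H_x) = 2H_q + H_p - E₁ - E₂ - E₃ - E₉`, `Φ(H_y) = H_q`,
`Φ(F₁) = H_q - E₉`, `Φ(F₂) = H_q - E₃`, `Φ(F₃) = E₄`, `Φ(F₄) = H_q - E₂`,
`Φ(F₅) = H_q - E₁`, `Φ(F₆) = E₅`, `Φ(F₇) = E₆`, `Φ(F₈) = E₇`, `Φ(F₉) = E₈`. -/
def PhiMat : Matrix (Fin 11) (Fin 11) ℤ :=
  !![ 2, 1, 1, 1, 0, 1, 1, 0, 0, 0, 0;
      1, 0, 0, 0, 0, 0, 0, 0, 0, 0, 0;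
     -1, 0, 0, 0, 0, 0,-1, 0, 0, 0, 0;
     -1, 0, 0, 0, 0,-1, 0, 0, 0, 0, 0;
     -1, 0, 0,-1, 0, 0, 0, 0, 0, 0, 0;
      0, 0, 0, 0, 1, 0, 0, 0, 0, 0, 0;
      0, 0, 0, 0, 0, 0, 0, 1, 0, 0, 0;
      0, 0, 0, 0, 0, 0, 0, 0, 1, 0, 0;
      0, 0, 0, 0, 0, 0, 0, 0, 0, 1, 0;
      0, 0, 0, 0, 0, 0, 0, 0, 0, 0, 1;
     -1, 0,-1, 0, 0, 0, 0, 0, 0, 0, 0]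

/-- The matrix of the map `Ψ : L → L'` of Lemma 3.1: column `j` lists the
coordinates of the image of the `j`-th basis vector of
`L = Span(H_q, H_p, E₁, …, E₉)` in the basis `(H_x, H_y, F₁, …, F₉)` of `L'`.
Explicitly: `Ψ(H_q) = H_y`, `Ψ(H_p) = H_x + 2H_y - F₁ - F₂ - F₄ - F₅`,
`Ψ(E₁) = H_y - F₅`, `Ψ(E₂) = H_y - F₄`, `Ψ(E₃) = H_y - F₂`, `Ψ(E₄) = F₃`,
`Ψ(E₅) = F₆`, `Ψ(E₆) = F₇`, `Ψ(E₇) = F₈`, `Ψ(E₈) = F₉`, `Ψ(E₉) = H_y - F₁`. -/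
def PsiMat : Matrix (Fin 11) (Fin 11) ℤ :=
  !![ 0, 1, 0, 0, 0, 0, 0, 0, 0, 0, 0;
      1, 2, 1, 1, 1, 0, 0, 0, 0, 0, 1;
      0,-1, 0, 0, 0, 0, 0, 0, 0, 0,-1;
      0,-1, 0, 0,-1, 0, 0, 0, 0, 0, 0;
      0, 0, 0, 0, 0, 1, 0, 0, 0, 0, 0;
      0,-1, 0,-1, 0, 0, 0, 0, 0, 0, 0;
      0,-1,-1, 0, 0, 0, 0, 0, 0, 0, 0;
      0, 0, 0, 0, 0, 0, 1, 0, 0, 0, 0;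
      0, 0, 0, 0, 0, 0, 0, 1, 0, 0, 0;
      0, 0, 0, 0, 0, 0, 0, 0, 1, 0, 0;
      0, 0, 0, 0, 0, 0, 0, 0, 0, 1, 0]

/-! The lattice identities are finite matrix identities: with `G` the Gram matrix of the
intersection form, `Φ` is an isometry iff `Φᵀ G Φ = G`, and `Φ Ψ = 1` already forces `Ψ Φ = 1`
since a one-sided inverse of a square matrix over a commutative ring is two-sided. -/

namespace Matrix

variable {n R : Type*} [Fintype n]

theorem leftInverse_mulVec_of_mul_eq_one [DecidableEq n] [Semiring R] {A B : Matrix n n R}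
    (h : A * B = 1) : Function.LeftInverse A.mulVec B.mulVec := fun v => by
  rw [mulVec_mulVec, h, one_mulVec]

theorem dotProduct_mulVec_mulVec_of_transpose_mul_mul_eq [CommSemiring R]
    {A G : Matrix n n R} (h : Aᵀ * G * A = G) (v w : n → R) :
    A *ᵥ v ⬝ᵥ G *ᵥ (A *ᵥ w) = v ⬝ᵥ G *ᵥ w := by
  rw [mulVec_mulVec, dotProduct_mulVec, vecMul_mulVec, ← Matrix.mul_assoc, h,
    ← dotProduct_mulVec]

end Matrix

def picGram : Matrix (Fin 11) (Fin 11) ℤ :=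
  !![ 0, 1, 0, 0, 0, 0, 0, 0, 0, 0, 0;
      1, 0, 0, 0, 0, 0, 0, 0, 0, 0, 0;
      0, 0,-1, 0, 0, 0, 0, 0, 0, 0, 0;
      0, 0, 0,-1, 0, 0, 0, 0, 0, 0, 0;
      0, 0, 0, 0,-1, 0, 0, 0, 0, 0, 0;
      0, 0, 0, 0, 0,-1, 0, 0, 0, 0, 0;
      0, 0, 0, 0, 0, 0,-1, 0, 0, 0, 0;
      0, 0, 0, 0, 0, 0, 0,-1, 0, 0, 0;
      0, 0, 0, 0, 0, 0, 0, 0,-1, 0, 0;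
      0, 0, 0, 0, 0, 0, 0, 0, 0,-1, 0;
      0, 0, 0, 0, 0, 0, 0, 0, 0, 0,-1]

theorem picForm_eq_dotProduct_mulVec (v w : Fin 11 → ℤ) : picForm v w = v ⬝ᵥ picGram *ᵥ w := by
  simp only [picForm, picGram, dotProduct, mulVec, of_apply, Fin.sum_univ_succ, Finset.univ_unique,
    Finset.sum_singleton, Finset.sum_neg_distrib, Fin.isValue, Fin.default_eq_zero, Fin.castSucc_succ,
    Fin.val_succ, Fin.val_castSucc, Fin.val_eq_zero, Fin.coe_ofNat_eq_mod, Nat.zero_mod, Nat.reduceAdd,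
    Nat.cast_ofNat, Fin.succ_zero_eq_one, Fin.succ_one_eq_two, Fin.reduceSucc, cons_val',
    cons_val_fin_one, cons_val_zero, cons_val_succ, Int.reduceNeg, zero_add, zero_mul, add_zero,
    neg_mul, mul_neg]
  ring

theorem PhiMat_mul_PsiMat : PhiMat * PsiMat = 1 := by
  decide

theorem PsiMat_mul_PhiMat : PsiMat * PhiMat = 1 :=
  mul_eq_one_comm.mp PhiMat_mul_PsiMat

theorem transpose_PhiMat_mul_picGram_mul_PhiMat : PhiMatᵀ * picGram * PhiMat = picGram := by
  decide

/-- Lemma 3.1: the ℤ-linear map `Φ : L' → L` given by the basis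
images above is an isometry of the Picard lattices, and it is bijective with
inverse the ℤ-linear map `Ψ : L → L'` given by the basis images above. -/
theorem vdPT_E61_Picard_change_of_basis :
    (∀ v w : Fin 11 → ℤ,
        picForm (PhiMat.mulVec v) (PhiMat.mulVec w) = picForm v w) ∧
    Function.Bijective (PhiMat.mulVec) ∧
    (∀ v : Fin 11 → ℤ, PhiMat.mulVec (PsiMat.mulVec v) = v) ∧
    (∀ v : Fin 11 → ℤ, PsiMat.mulVec (PhiMat.mulVec v) = v) := by
  have hΦΨ := leftInverse_mulVec_of_mul_eq_one PhiMat_mul_PsiMat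
  have hΨΦ := leftInverse_mulVec_of_mul_eq_one PsiMat_mul_PhiMat
  refine ⟨fun v w => ?_, ⟨hΨΦ.injective, hΦΨ.surjective⟩, hΦΨ, hΨΦ⟩
  simp only [picForm_eq_dotProduct_mulVec]
  exact dotProduct_mulVec_mulVec_of_transpose_mul_mul_eq
    transpose_PhiMat_mul_picGram_mul_PhiMat v w
end
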